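/- String induction: let P be a predicate on the natural numbers. If P 0 holds, and for every natural number x, P x implies P(x ⊕ 1), and for every natural number x, P x implies P(x ⊕ 2), then P x holds for every natural number x. -/

import Mathlib

def Q (x : ℕ) : ℕ := 2 ^ Nat.log 2 (x + 1)

def R (x : ℕ) : ℕ := (x + 1) - Q x

def cat (x y : ℕ) : ℕ := (x + 1) * Q y + R y - 1

infixl:65 " ⊙ " => cat

lemma Q_one : Q 1 = 2 := by decide

lemma Q_two : Q 2 = 2 := by decide

lemma R_one : R 1 = 0 := by decide

lemma R_two : R 2 = 1 := by decide

lemma cat_one (x : ℕ) : x ⊙ 1 = 2 * x + 1 := by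
  rw [cat, Q_one, R_one]
  omega

lemma cat_two (x : ℕ) : x ⊙ 2 = 2 * x + 2 := by
  rw [cat, Q_two, R_two]
  omega

/-- Every positive `n` is `2 * k + 1` or `2 * k + 2` for some `k < n`: bijective base-2 numeration. -/
theorem Nat.induction_two_mul_add_one_two {P : ℕ → Prop} (h0 : P 0)
    (h1 : ∀ n, P n → P (2 * n + 1)) (h2 : ∀ n, P n → P (2 * n + 2)) (n : ℕ) : P n := by
  induction n using Nat.strong_induction_on with
  | _ n ih =>
    rcases n with _ | m
    · exact h0
    · obtain ⟨k, rfl | rfl⟩ := Nat.even_or_odd' m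
      · exact h1 k (ih k (by omega))
      · exact h2 k (ih k (by omega))

theorem stmt_19 (P : ℕ → Prop) (h0 : P 0)
    (h1 : ∀ x : ℕ, P x → P (x ⊙ 1)) (h2 : ∀ x : ℕ, P x → P (x ⊙ 2)) :
    ∀ x : ℕ, P x := by
  simp only [cat_one, cat_two] at h1 h2
  exact Nat.induction_two_mul_add_one_two h0 h1 h2
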